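/- The SMP fixed-point characterization: λ' minimizes the dual objective L over the block of coordinates {λ_{e,i}(x) : e ∈ N_i, x ∈ χ} if and only if S_{e,i}^{λ'}(x) = μ_i^{λ'}(x) for all e ∈ N_i and x ∈ χ; moreover the explicit additive form δ_{e,i}(x) = (1/η)log S_{e,i}^λ(x) - (1/(η(|N_i|+1)))log(μ_i^λ(x)∏_{e'∈N_i}S_{e',i}^λ(x)) achieves this. -/

import Mathlib

/-!
The dual `L` is a sum of log-partition functions of exponential families that are affine in `λ`.
Differentiating along a line `λ + τ δ` gives `∑ (μ_i^λ(x) - S_{e,i}^λ(x)) δ_{e,i}(x)`, and Jensen's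
inequality for `exp` shows that `L` lies above this tangent plane. Since the block constraint only
lets `δ` move the coordinates at `i₀`, a point of the block minimizes `L` over it exactly when
these gradient entries vanish there.

Write `W = μ_{i₀}^λ ∏_e S_{e,i₀}^λ` and `K = |N_{i₀}|`. The SMP update multiplies the vertex factor
at `i₀` by `∏_e S_{e,i₀}^λ · W^{-K/(K+1)}` and the `i₀`-marginal of each incident edge factor by
`W^{1/(K+1)} / S_{e,i₀}^λ`, so all of them become proportional to `W^{1/(K+1)}` and agree after
normalization. Simplicity of the graph ensures that an edge meets `i₀` at one side only, so its
factor is tilted along that coordinate alone.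
-/

open Finset

noncomputable section

variable {n m d : ℕ}

/-- The endpoint of edge `e` at side `s`. -/
def ep (ends : Fin m → Fin n × Fin n) (e : Fin m) (s : Fin 2) : Fin n :=
  if s = 0 then (ends e).1 else (ends e).2

/-- Unnormalized vertex factor. -/
def vExp (η : ℝ) (ends : Fin m → Fin n × Fin n) (Ci : Fin n → Fin d → ℝ)
    (lam : Fin m → Fin 2 → Fin d → ℝ) (i : Fin n) (x : Fin d) : ℝ :=
  Real.exp (η * (-(Ci i x) +
    ∑ e, ∑ s, if ep ends e s = i then lam e s x else 0))

/-- Unnormalized edge factor. -/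
def eExp (η : ℝ) (Ce : Fin m → Fin d → Fin d → ℝ)
    (lam : Fin m → Fin 2 → Fin d → ℝ) (e : Fin m) (x₁ x₂ : Fin d) : ℝ :=
  Real.exp (η * (-(Ce e x₁ x₂) - lam e 0 x₁ - lam e 1 x₂))

/-- Normalized vertex pseudo-marginal `μ_i^λ`. -/
def muV (η : ℝ) (ends : Fin m → Fin n × Fin n) (Ci : Fin n → Fin d → ℝ)
    (lam : Fin m → Fin 2 → Fin d → ℝ) (i : Fin n) (x : Fin d) : ℝ :=
  vExp η ends Ci lam i x / ∑ x', vExp η ends Ci lam i x'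

/-- Normalized edge pseudo-marginal `μ_e^λ`. -/
def muE (η : ℝ) (Ce : Fin m → Fin d → Fin d → ℝ)
    (lam : Fin m → Fin 2 → Fin d → ℝ) (e : Fin m) (x₁ x₂ : Fin d) : ℝ :=
  eExp η Ce lam e x₁ x₂ / ∑ y₁, ∑ y₂, eExp η Ce lam e y₁ y₂

/-- Marginalization `S_{e,i}^λ` of the edge pseudo-marginal onto endpoint `s`. -/
def Smarg (η : ℝ) (Ce : Fin m → Fin d → Fin d → ℝ)
    (lam : Fin m → Fin 2 → Fin d → ℝ) (e : Fin m) (s : Fin 2) (x : Fin d) : ℝ :=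
  if s = 0 then ∑ x₂, muE η Ce lam e x x₂ else ∑ x₁, muE η Ce lam e x₁ x

/-- The dual objective `L`. -/
def dualL (η : ℝ) (ends : Fin m → Fin n × Fin n) (Ci : Fin n → Fin d → ℝ)
    (Ce : Fin m → Fin d → Fin d → ℝ) (lam : Fin m → Fin 2 → Fin d → ℝ) : ℝ :=
  (1 / η) * ∑ i, Real.log (∑ x, vExp η ends Ci lam i x)
    + (1 / η) * ∑ e, Real.log (∑ x₁, ∑ x₂, eExp η Ce lam e x₁ x₂)

/-- The neighborhood block of vertex `i₀`: pairs `(e,s)` with endpoint `i₀`. -/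
def nbhd (ends : Fin m → Fin n × Fin n) (i₀ : Fin n) : Finset (Fin m × Fin 2) :=
  Finset.univ.filter (fun p : Fin m × Fin 2 => ep ends p.1 p.2 = i₀)

/-- The explicit SMP update at vertex `i₀`:
`λ'_{e,i₀}(x) = λ_{e,i₀}(x) + (1/η) log S_{e,i₀}^λ(x)
  - (1/(η(|N_{i₀}|+1))) log (μ_{i₀}^λ(x) ∏_{e'∈N_{i₀}} S_{e',i₀}^λ(x))`. -/
def smpUpdate (η : ℝ) (ends : Fin m → Fin n × Fin n) (Ci : Fin n → Fin d → ℝ)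
    (Ce : Fin m → Fin d → Fin d → ℝ) (lam : Fin m → Fin 2 → Fin d → ℝ)
    (i₀ : Fin n) : Fin m → Fin 2 → Fin d → ℝ :=
  fun e s x =>
    if ep ends e s = i₀ then
      lam e s x + (1 / η) * Real.log (Smarg η Ce lam e s x)
        - (1 / (η * ((nbhd ends i₀).card + 1))) *
            Real.log (muV η ends Ci lam i₀ x *
              ∏ p ∈ nbhd ends i₀, Smarg η Ce lam p.1 p.2 x)
    else lam e s x

section LogSumExp

variable {ι : Type*} [Fintype ι] [Nonempty ι] {c : ι → ℝ}

lemma log_sum_add_sum_div_mul_le_log_sum_mul_exp (hc : ∀ i, 0 < c i) (t : ι → ℝ) :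
    Real.log (∑ i, c i) + ∑ i, c i / (∑ j, c j) * t i
      ≤ Real.log (∑ i, c i * Real.exp (t i)) := by
  have hC : 0 < ∑ j, c j := Finset.sum_pos (fun i _ => hc i) univ_nonempty
  have hZ : 0 < ∑ i, c i * Real.exp (t i) :=
    Finset.sum_pos (fun i _ => mul_pos (hc i) (Real.exp_pos _)) univ_nonempty
  have jensen := convexOn_exp.map_sum_le (t := univ) (w := fun i => c i / ∑ j, c j) (p := t)
    (fun i _ => (div_pos (hc i) hC).le) (by rw [← Finset.sum_div, div_self hC.ne'])
    (fun i _ => Set.mem_univ _)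
  simp only [smul_eq_mul, div_mul_eq_mul_div, ← Finset.sum_div] at jensen
  rw [← Real.le_log_iff_exp_le (div_pos hZ hC), Real.log_div hZ.ne' hC.ne'] at jensen
  simp only [div_mul_eq_mul_div, ← Finset.sum_div]
  linarith

lemma hasDerivAt_log_sum_mul_exp (hc : ∀ i, 0 < c i) (t : ι → ℝ) :
    HasDerivAt (fun τ => Real.log (∑ i, c i * Real.exp (τ * t i)))
      (∑ i, c i / (∑ j, c j) * t i) 0 := by
  have hC : 0 < ∑ j, c j := Finset.sum_pos (fun i _ => hc i) univ_nonempty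
  have h := (HasDerivAt.fun_sum (u := univ) fun i _ =>
    ((hasDerivAt_mul_const (x := (0 : ℝ)) (t i)).exp).const_mul (c i)).log
    (by simpa using hC.ne')
  convert h using 1
  simp only [zero_mul, Real.exp_zero, one_mul, mul_one, div_mul_eq_mul_div, Finset.sum_div]

end LogSumExp

lemma div_sum_eq_div_sum_of_eq_mul {ι : Type*} [Fintype ι] {a g : ι → ℝ} {k : ℝ} (hk : k ≠ 0)
    (h : ∀ z, a z = k * g z) (x : ι) :
    a x / ∑ z, a z = g x / ∑ z, g z := by
  simp only [h, ← Finset.mul_sum, mul_div_mul_left _ _ hk]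

def incidentSum (ends : Fin m → Fin n × Fin n) (lam : Fin m → Fin 2 → Fin d → ℝ) (i : Fin n)
    (x : Fin d) : ℝ :=
  ∑ e, ∑ s, if ep ends e s = i then lam e s x else 0

def dualGrad (η : ℝ) (ends : Fin m → Fin n × Fin n) (Ci : Fin n → Fin d → ℝ)
    (Ce : Fin m → Fin d → Fin d → ℝ) (lam : Fin m → Fin 2 → Fin d → ℝ) (e : Fin m) (s : Fin 2)
    (x : Fin d) : ℝ :=
  muV η ends Ci lam (ep ends e s) x - Smarg η Ce lam e s x

section Dual

variable {η : ℝ} {ends : Fin m → Fin n × Fin n} {Ci : Fin n → Fin d → ℝ}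
  {Ce : Fin m → Fin d → Fin d → ℝ}

lemma vExp_pos (lam : Fin m → Fin 2 → Fin d → ℝ) (i : Fin n) (x : Fin d) :
    0 < vExp η ends Ci lam i x :=
  Real.exp_pos _

lemma eExp_pos (lam : Fin m → Fin 2 → Fin d → ℝ) (e : Fin m) (x₁ x₂ : Fin d) :
    0 < eExp η Ce lam e x₁ x₂ :=
  Real.exp_pos _

lemma incidentSum_add (lam δ : Fin m → Fin 2 → Fin d → ℝ) (i : Fin n) (x : Fin d) :
    incidentSum ends (lam + δ) i x = incidentSum ends lam i x + incidentSum ends δ i x := by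
  simp only [incidentSum, Pi.add_apply, ← Finset.sum_add_distrib]
  refine Finset.sum_congr rfl fun e _ => Finset.sum_congr rfl fun s _ => ?_
  split_ifs <;> simp

lemma incidentSum_smul (τ : ℝ) (δ : Fin m → Fin 2 → Fin d → ℝ) (i : Fin n) (x : Fin d) :
    incidentSum ends (τ • δ) i x = τ * incidentSum ends δ i x := by
  simp only [incidentSum, Finset.mul_sum, mul_ite, mul_zero, Pi.smul_apply, smul_eq_mul]

lemma incidentSum_eq_sum_nbhd (lam : Fin m → Fin 2 → Fin d → ℝ) (i : Fin n) (x : Fin d) :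
    incidentSum ends lam i x = ∑ p ∈ nbhd ends i, lam p.1 p.2 x := by
  rw [nbhd, Finset.sum_filter, Fintype.sum_prod_type]
  rfl

lemma vExp_add (lam δ : Fin m → Fin 2 → Fin d → ℝ) (i : Fin n) (x : Fin d) :
    vExp η ends Ci (lam + δ) i x
      = vExp η ends Ci lam i x * Real.exp (η * incidentSum ends δ i x) := by
  rw [vExp, vExp, ← Real.exp_add]
  change _ = Real.exp (η * (-(Ci i x) + incidentSum ends lam i x) + _)
  rw [← incidentSum, incidentSum_add]
  ring_nf

lemma eExp_add (lam δ : Fin m → Fin 2 → Fin d → ℝ) (e : Fin m) (x₁ x₂ : Fin d) :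
    eExp η Ce (lam + δ) e x₁ x₂
      = eExp η Ce lam e x₁ x₂ * Real.exp (-η * (δ e 0 x₁ + δ e 1 x₂)) := by
  simp only [eExp, ← Real.exp_add, Pi.add_apply]
  ring_nf

lemma dualL_add_smul (lam δ : Fin m → Fin 2 → Fin d → ℝ) (τ : ℝ) :
    dualL η ends Ci Ce (lam + τ • δ)
      = (1 / η) * ∑ i, Real.log (∑ x, vExp η ends Ci lam i x
            * Real.exp (τ * (η * incidentSum ends δ i x)))
        + (1 / η) * ∑ e, Real.log (∑ p : Fin d × Fin d, eExp η Ce lam e p.1 p.2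
            * Real.exp (τ * (-η * (δ e 0 p.1 + δ e 1 p.2)))) := by
  simp only [dualL, vExp_add, eExp_add, incidentSum_smul, Pi.smul_apply, smul_eq_mul,
    Fintype.sum_prod_type]
  ring_nf

lemma sum_muV_mul_incidentSum (lam δ : Fin m → Fin 2 → Fin d → ℝ) :
    ∑ i, ∑ x, muV η ends Ci lam i x * incidentSum ends δ i x
      = ∑ e, ∑ s, ∑ x, muV η ends Ci lam (ep ends e s) x * δ e s x := by
  simp only [incidentSum, Finset.mul_sum, mul_ite, mul_zero]
  rw [Finset.sum_comm]
  have hx : ∀ x, ∑ i, ∑ e, ∑ s, (if ep ends e s = i then muV η ends Ci lam i x * δ e s x else 0)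
      = ∑ e, ∑ s, muV η ends Ci lam (ep ends e s) x * δ e s x := fun x => by
    rw [Finset.sum_comm]
    refine Finset.sum_congr rfl fun e _ => ?_
    rw [Finset.sum_comm]
    exact Finset.sum_congr rfl fun s _ => Fintype.sum_ite_eq _ _
  simp only [hx]
  rw [Finset.sum_comm]
  exact Finset.sum_congr rfl fun e _ => Finset.sum_comm

lemma sum_muE_mul (lam δ : Fin m → Fin 2 → Fin d → ℝ) (e : Fin m) :
    ∑ p : Fin d × Fin d, eExp η Ce lam e p.1 p.2 / (∑ q : Fin d × Fin d, eExp η Ce lam e q.1 q.2)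
        * (δ e 0 p.1 + δ e 1 p.2)
      = ∑ s, ∑ x, Smarg η Ce lam e s x * δ e s x := by
  simp only [Fintype.sum_prod_type, mul_add, Finset.sum_add_distrib, Fin.sum_univ_two, Smarg,
    muE, Finset.sum_mul, if_pos, one_ne_zero, if_false]
  exact congrArg _ Finset.sum_comm

lemma sum_dualGrad_mul_eq (hη : η ≠ 0) (lam δ : Fin m → Fin 2 → Fin d → ℝ) :
    ∑ e, ∑ s, ∑ x, dualGrad η ends Ci Ce lam e s x * δ e s x
      = (1 / η) * ∑ i, ∑ x, muV η ends Ci lam i x * (η * incidentSum ends δ i x)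
        + (1 / η) * ∑ e, ∑ p : Fin d × Fin d,
            eExp η Ce lam e p.1 p.2 / (∑ q : Fin d × Fin d, eExp η Ce lam e q.1 q.2)
              * (-η * (δ e 0 p.1 + δ e 1 p.2)) := by
  have hV := sum_muV_mul_incidentSum (η := η) (ends := ends) (Ci := Ci) lam δ
  have hE := fun e => sum_muE_mul (η := η) (Ce := Ce) lam δ e
  simp only [mul_left_comm _ η, mul_left_comm _ (-η), ← Finset.mul_sum, hV, hE]
  simp only [dualGrad, sub_mul, Finset.sum_sub_distrib]
  field_simp
  ring

lemma dualL_add_ge [NeZero d] (hη : 0 < η) (lam δ : Fin m → Fin 2 → Fin d → ℝ) :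
    dualL η ends Ci Ce lam + ∑ e, ∑ s, ∑ x, dualGrad η ends Ci Ce lam e s x * δ e s x
      ≤ dualL η ends Ci Ce (lam + δ) := by
  have hη' : 0 ≤ 1 / η := by positivity
  have h := dualL_add_smul (η := η) (ends := ends) (Ci := Ci) (Ce := Ce) lam δ 1
  simp only [one_smul, one_mul] at h
  calc dualL η ends Ci Ce lam + ∑ e, ∑ s, ∑ x, dualGrad η ends Ci Ce lam e s x * δ e s x
      = (1 / η) * ∑ i, (Real.log (∑ x, vExp η ends Ci lam i x)
            + ∑ x, muV η ends Ci lam i x * (η * incidentSum ends δ i x))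
        + (1 / η) * ∑ e, (Real.log (∑ p : Fin d × Fin d, eExp η Ce lam e p.1 p.2)
            + ∑ p : Fin d × Fin d,
                eExp η Ce lam e p.1 p.2 / (∑ q : Fin d × Fin d, eExp η Ce lam e q.1 q.2)
                  * (-η * (δ e 0 p.1 + δ e 1 p.2))) := by
        rw [sum_dualGrad_mul_eq hη.ne', dualL, Finset.sum_add_distrib, Finset.sum_add_distrib]
        simp only [Fintype.sum_prod_type]
        ring
    _ ≤ dualL η ends Ci Ce (lam + δ) := by
        rw [h]
        gcongr with i _ e _
        · exact log_sum_add_sum_div_mul_le_log_sum_mul_exp (vExp_pos lam i) _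
        · exact log_sum_add_sum_div_mul_le_log_sum_mul_exp
            (fun p : Fin d × Fin d => eExp_pos lam e p.1 p.2) _

lemma hasDerivAt_dualL_add_smul [NeZero d] (hη : η ≠ 0) (lam δ : Fin m → Fin 2 → Fin d → ℝ) :
    HasDerivAt (fun τ : ℝ => dualL η ends Ci Ce (lam + τ • δ))
      (∑ e, ∑ s, ∑ x, dualGrad η ends Ci Ce lam e s x * δ e s x) 0 := by
  rw [sum_dualGrad_mul_eq hη, funext (dualL_add_smul lam δ)]
  have hV := HasDerivAt.fun_sum (u := univ) fun i _ =>
    hasDerivAt_log_sum_mul_exp (vExp_pos (η := η) (ends := ends) (Ci := Ci) lam i)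
      (fun x => η * incidentSum ends δ i x)
  have hE := HasDerivAt.fun_sum (u := univ) fun e _ =>
    hasDerivAt_log_sum_mul_exp (fun p : Fin d × Fin d => eExp_pos (η := η) (Ce := Ce) lam e p.1 p.2)
      (fun p => -η * (δ e 0 p.1 + δ e 1 p.2))
  exact (hV.const_mul (1 / η)).add (hE.const_mul (1 / η))

end Dual

section Block

variable {η : ℝ} {ends : Fin m → Fin n × Fin n} {Ci : Fin n → Fin d → ℝ}
  {Ce : Fin m → Fin d → Fin d → ℝ} {i₀ : Fin n}

lemma dualGrad_eq_zero_iff {lam : Fin m → Fin 2 → Fin d → ℝ} {e : Fin m} {s : Fin 2}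
    (hes : ep ends e s = i₀) (x : Fin d) :
    dualGrad η ends Ci Ce lam e s x = 0 ↔ Smarg η Ce lam e s x = muV η ends Ci lam i₀ x := by
  rw [dualGrad, hes, sub_eq_zero, eq_comm]

lemma dualL_le_of_dualGrad_eq_zero [NeZero d] (hη : 0 < η) {lam lam' : Fin m → Fin 2 → Fin d → ℝ}
    (hgrad : ∀ e s, ep ends e s = i₀ → ∀ x, dualGrad η ends Ci Ce lam e s x = 0)
    (hlam' : ∀ e s x, ep ends e s ≠ i₀ → lam' e s x = lam e s x) :
    dualL η ends Ci Ce lam ≤ dualL η ends Ci Ce lam' := by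
  have hpair : ∑ e, ∑ s, ∑ x, dualGrad η ends Ci Ce lam e s x * (lam' - lam) e s x = 0 := by
    refine Finset.sum_eq_zero fun e _ => Finset.sum_eq_zero fun s _ =>
      Finset.sum_eq_zero fun x _ => ?_
    by_cases hes : ep ends e s = i₀
    · rw [hgrad e s hes x, zero_mul]
    · simp only [Pi.sub_apply, hlam' e s x hes, sub_self, mul_zero]
  have h := dualL_add_ge (ends := ends) (Ci := Ci) (Ce := Ce) hη lam (lam' - lam)
  rwa [hpair, add_zero, add_sub_cancel] at h

lemma dualGrad_eq_zero_of_forall_dualL_le [NeZero d] (hη : η ≠ 0)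
    {lam : Fin m → Fin 2 → Fin d → ℝ}
    (hmin : ∀ lam' : Fin m → Fin 2 → Fin d → ℝ,
      (∀ e s x, ep ends e s ≠ i₀ → lam' e s x = lam e s x) →
        dualL η ends Ci Ce lam ≤ dualL η ends Ci Ce lam')
    {e : Fin m} {s : Fin 2} (hes : ep ends e s = i₀) (x : Fin d) :
    dualGrad η ends Ci Ce lam e s x = 0 := by
  set δ : Fin m → Fin 2 → Fin d → ℝ := fun e' s' x' => if e' = e ∧ s' = s ∧ x' = x then 1 else 0
  have hloc : IsLocalMin (fun τ : ℝ => dualL η ends Ci Ce (lam + τ • δ)) 0 :=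
    Filter.Eventually.of_forall fun τ => by
      show dualL η ends Ci Ce (lam + (0 : ℝ) • δ) ≤ dualL η ends Ci Ce (lam + τ • δ)
      rw [zero_smul, add_zero]
      refine hmin _ fun e' s' x' h => ?_
      have : ¬(e' = e ∧ s' = s ∧ x' = x) := by rintro ⟨rfl, rfl, -⟩; exact h hes
      simp [δ, this]
  simpa [δ, ite_and] using hloc.hasDerivAt_eq_zero (hasDerivAt_dualL_add_smul hη lam δ)

end Block

def eMarg (η : ℝ) (Ce : Fin m → Fin d → Fin d → ℝ) (lam : Fin m → Fin 2 → Fin d → ℝ) (e : Fin m)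
    (s : Fin 2) (x : Fin d) : ℝ :=
  if s = 0 then ∑ y, eExp η Ce lam e x y else ∑ y, eExp η Ce lam e y x

section SMP

variable {η : ℝ} {ends : Fin m → Fin n × Fin n} {Ci : Fin n → Fin d → ℝ}
  {Ce : Fin m → Fin d → Fin d → ℝ}

lemma ep_ne_of_ne {e : Fin m} (hsimple : (ends e).1 ≠ (ends e).2) {s s' : Fin 2} (hs : s' ≠ s)
    {i : Fin n} (hes : ep ends e s = i) : ep ends e s' ≠ i := by
  subst hes
  fin_cases s <;> fin_cases s' <;> simp_all [ep, eq_comm]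

lemma sum_eMarg (lam : Fin m → Fin 2 → Fin d → ℝ) (e : Fin m) (s : Fin 2) :
    ∑ z, eMarg η Ce lam e s z = ∑ x, ∑ y, eExp η Ce lam e x y := by
  fin_cases s
  · simp [eMarg]
  · simp [eMarg, Finset.sum_comm (f := fun x y => eExp η Ce lam e x y)]

lemma Smarg_eq_eMarg_div (lam : Fin m → Fin 2 → Fin d → ℝ) (e : Fin m) (s : Fin 2) (x : Fin d) :
    Smarg η Ce lam e s x = eMarg η Ce lam e s x / ∑ z, eMarg η Ce lam e s z := by
  rw [sum_eMarg]
  fin_cases s <;> simp [Smarg, eMarg, muE, Finset.sum_div]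

lemma eMarg_add {lam δ : Fin m → Fin 2 → Fin d → ℝ} {e : Fin m} {s : Fin 2}
    (hδ : ∀ s', s' ≠ s → ∀ y, δ e s' y = 0) (x : Fin d) :
    eMarg η Ce (lam + δ) e s x = eMarg η Ce lam e s x * Real.exp (-η * δ e s x) := by
  fin_cases s <;> simp [eMarg, eExp_add, hδ, Finset.sum_mul]

lemma eMarg_pos [NeZero d] (lam : Fin m → Fin 2 → Fin d → ℝ) (e : Fin m) (s : Fin 2) (x : Fin d) :
    0 < eMarg η Ce lam e s x := by
  unfold eMarg
  split_ifs <;> exact Finset.sum_pos (fun y _ => eExp_pos lam e _ _) univ_nonempty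

lemma sum_eMarg_pos [NeZero d] (lam : Fin m → Fin 2 → Fin d → ℝ) (e : Fin m) (s : Fin 2) :
    0 < ∑ z, eMarg η Ce lam e s z :=
  Finset.sum_pos (fun z _ => eMarg_pos lam e s z) univ_nonempty

lemma Smarg_pos [NeZero d] (lam : Fin m → Fin 2 → Fin d → ℝ) (e : Fin m) (s : Fin 2) (x : Fin d) :
    0 < Smarg η Ce lam e s x := by
  rw [Smarg_eq_eMarg_div]
  exact div_pos (eMarg_pos lam e s x) (sum_eMarg_pos lam e s)

lemma sum_vExp_pos [NeZero d] (lam : Fin m → Fin 2 → Fin d → ℝ) (i : Fin n) :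
    0 < ∑ y, vExp η ends Ci lam i y :=
  Finset.sum_pos (fun y _ => vExp_pos lam i y) univ_nonempty

lemma muV_pos [NeZero d] (lam : Fin m → Fin 2 → Fin d → ℝ) (i : Fin n) (x : Fin d) :
    0 < muV η ends Ci lam i x :=
  div_pos (vExp_pos lam i x) (sum_vExp_pos lam i)

def smpGeomMean (η : ℝ) (ends : Fin m → Fin n × Fin n) (Ci : Fin n → Fin d → ℝ)
    (Ce : Fin m → Fin d → Fin d → ℝ) (lam : Fin m → Fin 2 → Fin d → ℝ) (i₀ : Fin n) (x : Fin d) :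
    ℝ :=
  Real.exp (Real.log (muV η ends Ci lam i₀ x * ∏ p ∈ nbhd ends i₀, Smarg η Ce lam p.1 p.2 x)
    / ((nbhd ends i₀).card + 1))

lemma smpUpdate_sub_apply (lam : Fin m → Fin 2 → Fin d → ℝ) (i₀ : Fin n) (e : Fin m) (s : Fin 2)
    (x : Fin d) :
    (smpUpdate η ends Ci Ce lam i₀ - lam) e s x =
      if ep ends e s = i₀ then
        (1 / η) * Real.log (Smarg η Ce lam e s x)
          - (1 / (η * ((nbhd ends i₀).card + 1))) *
              Real.log (muV η ends Ci lam i₀ x * ∏ p ∈ nbhd ends i₀, Smarg η Ce lam p.1 p.2 x)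
      else 0 := by
  simp only [Pi.sub_apply, smpUpdate]
  split_ifs <;> ring

lemma vExp_smpUpdate [NeZero d] (hη : η ≠ 0) (lam : Fin m → Fin 2 → Fin d → ℝ) (i₀ : Fin n)
    (z : Fin d) :
    vExp η ends Ci (smpUpdate η ends Ci Ce lam i₀) i₀ z
      = (∑ y, vExp η ends Ci lam i₀ y) * smpGeomMean η ends Ci Ce lam i₀ z := by
  have hlog : Real.log (muV η ends Ci lam i₀ z * ∏ p ∈ nbhd ends i₀, Smarg η Ce lam p.1 p.2 z)
      = Real.log (muV η ends Ci lam i₀ z)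
        + ∑ p ∈ nbhd ends i₀, Real.log (Smarg η Ce lam p.1 p.2 z) := by
    rw [Real.log_mul (muV_pos lam i₀ z).ne'
        (Finset.prod_pos fun p _ => Smarg_pos lam p.1 p.2 z).ne',
      Real.log_prod fun p _ => (Smarg_pos lam p.1 p.2 z).ne']
  have hinc : η * incidentSum ends (smpUpdate η ends Ci Ce lam i₀ - lam) i₀ z
      = ∑ p ∈ nbhd ends i₀, Real.log (Smarg η Ce lam p.1 p.2 z)
        - (nbhd ends i₀).card / ((nbhd ends i₀).card + 1)
          * Real.log (muV η ends Ci lam i₀ z * ∏ p ∈ nbhd ends i₀, Smarg η Ce lam p.1 p.2 z) := by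
    rw [incidentSum_eq_sum_nbhd, Finset.sum_congr rfl fun p hp => by
      rw [smpUpdate_sub_apply, if_pos (Finset.mem_filter.mp hp).2]]
    rw [Finset.sum_sub_distrib, Finset.sum_const, nsmul_eq_mul, ← Finset.mul_sum]
    field_simp
  have hvExp : vExp η ends Ci lam i₀ z
      = (∑ y, vExp η ends Ci lam i₀ y) * Real.exp (Real.log (muV η ends Ci lam i₀ z)) := by
    rw [Real.exp_log (muV_pos lam i₀ z), muV, mul_div_cancel₀ _ (sum_vExp_pos lam i₀).ne']
  rw [← add_sub_cancel lam (smpUpdate η ends Ci Ce lam i₀), vExp_add, hinc, hvExp, mul_assoc,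
    ← Real.exp_add, smpGeomMean, hlog]
  congr 2
  field_simp
  ring

lemma eMarg_smpUpdate [NeZero d] (hη : η ≠ 0) (lam : Fin m → Fin 2 → Fin d → ℝ) {i₀ : Fin n}
    {e : Fin m} (hsimple : (ends e).1 ≠ (ends e).2) {s : Fin 2} (hes : ep ends e s = i₀)
    (z : Fin d) :
    eMarg η Ce (smpUpdate η ends Ci Ce lam i₀) e s z
      = (∑ y, eMarg η Ce lam e s y) * smpGeomMean η ends Ci Ce lam i₀ z := by
  have hδ : ∀ s', s' ≠ s → ∀ y, (smpUpdate η ends Ci Ce lam i₀ - lam) e s' y = 0 :=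
    fun s' hs' y => by rw [smpUpdate_sub_apply, if_neg (ep_ne_of_ne hsimple hs' hes)]
  have hS : eMarg η Ce lam e s z
      = (∑ y, eMarg η Ce lam e s y) * Real.exp (Real.log (Smarg η Ce lam e s z)) := by
    rw [Real.exp_log (Smarg_pos lam e s z), Smarg_eq_eMarg_div,
      mul_div_cancel₀ _ (sum_eMarg_pos lam e s).ne']
  rw [← add_sub_cancel lam (smpUpdate η ends Ci Ce lam i₀), eMarg_add hδ, smpUpdate_sub_apply,
    if_pos hes, hS, mul_assoc, ← Real.exp_add, smpGeomMean]
  congr 2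
  field_simp
  ring

theorem Smarg_smpUpdate_eq_muV [NeZero d] (hη : η ≠ 0) (lam : Fin m → Fin 2 → Fin d → ℝ)
    {i₀ : Fin n} {e : Fin m} (hsimple : (ends e).1 ≠ (ends e).2) {s : Fin 2}
    (hes : ep ends e s = i₀) (x : Fin d) :
    Smarg η Ce (smpUpdate η ends Ci Ce lam i₀) e s x
      = muV η ends Ci (smpUpdate η ends Ci Ce lam i₀) i₀ x := by
  rw [Smarg_eq_eMarg_div, muV,
    div_sum_eq_div_sum_of_eq_mul (sum_eMarg_pos lam e s).ne' (eMarg_smpUpdate hη lam hsimple hes),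
    div_sum_eq_div_sum_of_eq_mul (sum_vExp_pos lam i₀).ne' (vExp_smpUpdate hη lam i₀)]

end SMP

/-- SMP fixed-point characterization: a block update `λ'` at vertex `i₀`
minimizes the dual objective over the block `{λ_{e,i₀}(x) : e ∈ N_{i₀}, x ∈ χ}`
if and only if `S_{e,i₀}^{λ'}(x) = μ_{i₀}^{λ'}(x)` for all `e ∈ N_{i₀}` and
`x ∈ χ`; moreover the explicit SMP update achieves this matching condition. -/
theorem smp_fixed_point (η : ℝ) (hη : 0 < η) (hd : 2 ≤ d)
    (ends : Fin m → Fin n × Fin n)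
    (hsimple : ∀ e, (ends e).1 ≠ (ends e).2)
    (Ci : Fin n → Fin d → ℝ) (Ce : Fin m → Fin d → Fin d → ℝ)
    (lam : Fin m → Fin 2 → Fin d → ℝ) (i₀ : Fin n) :
    (∀ lam' : Fin m → Fin 2 → Fin d → ℝ,
      (∀ e s x, ep ends e s ≠ i₀ → lam' e s x = lam e s x) →
      ((∀ lam'' : Fin m → Fin 2 → Fin d → ℝ,
          (∀ e s x, ep ends e s ≠ i₀ → lam'' e s x = lam e s x) →
          dualL η ends Ci Ce lam' ≤ dualL η ends Ci Ce lam'')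
        ↔ (∀ e s, ep ends e s = i₀ → ∀ x,
            Smarg η Ce lam' e s x = muV η ends Ci lam' i₀ x))) ∧
    (∀ e s, ep ends e s = i₀ → ∀ x,
      Smarg η Ce (smpUpdate η ends Ci Ce lam i₀) e s x
        = muV η ends Ci (smpUpdate η ends Ci Ce lam i₀) i₀ x) := by
  have : NeZero d := ⟨by omega⟩
  refine ⟨fun lam' hlam' => ⟨fun hmin e s hes x => ?_, fun hmatch lam'' hlam'' => ?_⟩,
    fun e s hes x => Smarg_smpUpdate_eq_muV hη.ne' lam (hsimple e) hes x⟩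
  · have hmin' : ∀ lam'' : Fin m → Fin 2 → Fin d → ℝ,
        (∀ e s x, ep ends e s ≠ i₀ → lam'' e s x = lam' e s x) →
          dualL η ends Ci Ce lam' ≤ dualL η ends Ci Ce lam'' :=
      fun lam'' h => hmin lam'' fun e s x hes => (h e s x hes).trans (hlam' e s x hes)
    exact (dualGrad_eq_zero_iff hes x).mp (dualGrad_eq_zero_of_forall_dualL_le hη.ne' hmin' hes x)
  · refine dualL_le_of_dualGrad_eq_zero hη
      (fun e s hes x => (dualGrad_eq_zero_iff hes x).mpr (hmatch e s hes x)) ?_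
    exact fun e s x hes => (hlam'' e s x hes).trans (hlam' e s x hes).symm

end
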